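/- Consider the explicit finite-volume scheme for the one-dimensional scalar continuity equation with saturation. Let ψ be a saturation with saturation level α, let U > 0 satisfy |u_{i+1/2}| ≤ U for all i, let γ = inf_{s ∈ [0,α)} (α − s)/(α·ψ(s)) and Γ = min{1/ψ(0), γ}, and assume the CFL condition Δt ≤ Γ·Δx/(2U). If 0 ≤ ρ_i ≤ α for all i ∈ ℤ, then the updated values satisfy 0 ≤ ρ_i' ≤ α for all i ∈ ℤ. -/

import Mathlib

/-- A *saturation* with saturation level `α > 0`: a continuous non-increasing function
`ψ : [0,∞) → ℝ` with `ψ α = 0` and `(α − s)·ψ s > 0` for every `s ≥ 0`, `s ≠ α`. -/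
def IsSaturation (ψ : ℝ → ℝ) (α : ℝ) : Prop :=
  0 < α ∧ ContinuousOn ψ (Set.Ici 0) ∧
    (∀ s₁ s₂, 0 ≤ s₁ → s₁ ≤ s₂ → ψ s₂ ≤ ψ s₁) ∧
    ψ α = 0 ∧ ∀ s, 0 ≤ s → s ≠ α → 0 < (α - s) * ψ s

/-- The minmod limiter. -/
noncomputable def minmod (a b c : ℝ) : ℝ :=
  if 0 < a ∧ 0 < b ∧ 0 < c then min a (min b c)
  else if a < 0 ∧ b < 0 ∧ c < 0 then max a (max b c)
  else 0

/-- Minmod mmSlope `(ρ_x)_i`. -/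
noncomputable def mmSlope (θ Δx : ℝ) (ρ : ℤ → ℝ) (i : ℤ) : ℝ :=
  minmod (θ * (ρ (i + 1) - ρ i) / Δx) ((ρ (i + 1) - ρ (i - 1)) / (2 * Δx))
    (θ * (ρ i - ρ (i - 1)) / Δx)

/-- East reconstruction `ρ_i^E`. -/
noncomputable def recE (θ Δx : ℝ) (ρ : ℤ → ℝ) (i : ℤ) : ℝ :=
  ρ i + Δx / 2 * mmSlope θ Δx ρ i

/-- West reconstruction `ρ_i^W`. -/
noncomputable def recW (θ Δx : ℝ) (ρ : ℤ → ℝ) (i : ℤ) : ℝ :=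
  ρ i - Δx / 2 * mmSlope θ Δx ρ i

/-- Numerical flux `F_{i+1/2}` of the explicit scalar scheme (with `θ = 2`);
`u i` denotes the interface velocity `u_{i+1/2}`. -/
noncomputable def numFlux (ψ : ℝ → ℝ) (Δx : ℝ) (ρ u : ℤ → ℝ) (i : ℤ) : ℝ :=
  recE 2 Δx ρ i * ψ (recW 2 Δx ρ (i + 1)) * max (u i) 0 +
    recW 2 Δx ρ (i + 1) * ψ (recE 2 Δx ρ i) * min (u i) 0

/-- The updated cell values `ρ_i'` of the explicit scalar scheme. -/
noncomputable def updateExplicit (ψ : ℝ → ℝ) (Δx Δt : ℝ) (ρ u : ℤ → ℝ) (i : ℤ) : ℝ :=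
  ρ i - Δt / Δx * (numFlux ψ Δx ρ u i - numFlux ψ Δx ρ u (i - 1))

/-- The CFL constant `γ = inf_{s ∈ [0,α)} (α − s)/(α·ψ s)`. -/
noncomputable def gammaCFL (ψ : ℝ → ℝ) (α : ℝ) : ℝ :=
  sInf ((fun s => (α - s) / (α * ψ s)) '' Set.Ico 0 α)

lemma rec_mem (Δx α : ℝ) (hΔx : 0 < Δx) (ρ : ℤ → ℝ) (i : ℤ)
    (h0 : 0 ≤ ρ (i-1)) (h1 : 0 ≤ ρ i) (h2 : 0 ≤ ρ (i+1))
    (h0' : ρ (i-1) ≤ α) (h1' : ρ i ≤ α) (h2' : ρ (i+1) ≤ α) :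
    (0 ≤ recE 2 Δx ρ i ∧ recE 2 Δx ρ i ≤ α) ∧
      (0 ≤ recW 2 Δx ρ i ∧ recW 2 Δx ρ i ≤ α) := by
  have hx : Δx ≠ 0 := ne_of_gt hΔx
  unfold recE recW mmSlope minmod
  set a := 2 * (ρ (i + 1) - ρ i) / Δx with ha
  set b := (ρ (i + 1) - ρ (i - 1)) / (2 * Δx) with hb
  set c := 2 * (ρ i - ρ (i - 1)) / Δx with hc
  have hea : Δx / 2 * a = ρ (i+1) - ρ i := by rw [ha, mul_div_assoc', div_eq_iff hx]; ring
  have hec : Δx / 2 * c = ρ i - ρ (i-1) := by rw [hc, mul_div_assoc', div_eq_iff hx]; ring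
  split_ifs with h h'
  · obtain ⟨hpa, hpb, hpc⟩ := h
    have hm1 : min a (min b c) ≤ a := min_le_left _ _
    have hm2 : min a (min b c) ≤ c := le_trans (min_le_right _ _) (min_le_right _ _)
    have hm0 : 0 < min a (min b c) := lt_min hpa (lt_min hpb hpc)
    have e1 : Δx / 2 * min a (min b c) ≤ Δx / 2 * a :=
      mul_le_mul_of_nonneg_left hm1 (by linarith)
    have e2 : Δx / 2 * min a (min b c) ≤ Δx / 2 * c :=
      mul_le_mul_of_nonneg_left hm2 (by linarith)
    have e3 : 0 ≤ Δx / 2 * min a (min b c) := by positivity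
    refine ⟨⟨by linarith, by linarith⟩, ⟨by linarith, by linarith⟩⟩
  · obtain ⟨hpa, hpb, hpc⟩ := h'
    have hm1 : a ≤ max a (max b c) := le_max_left _ _
    have hm2 : c ≤ max a (max b c) := le_trans (le_max_right _ _) (le_max_right _ _)
    have hm0 : max a (max b c) < 0 := max_lt hpa (max_lt hpb hpc)
    have e1 : Δx / 2 * a ≤ Δx / 2 * max a (max b c) :=
      mul_le_mul_of_nonneg_left hm1 (by linarith)
    have e2 : Δx / 2 * c ≤ Δx / 2 * max a (max b c) :=
      mul_le_mul_of_nonneg_left hm2 (by linarith)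
    have e3 : Δx / 2 * max a (max b c) ≤ 0 := by nlinarith
    refine ⟨⟨by linarith, by linarith⟩, ⟨by linarith, by linarith⟩⟩
  · simp only [mul_zero, add_zero, sub_zero]
    exact ⟨⟨h1, h1'⟩, ⟨h1, h1'⟩⟩


set_option maxHeartbeats 1000000 in
/-- Boundedness and non-negativity of the explicit scalar scheme under the CFL condition
`Δt ≤ Γ·Δx/(2U)` with `Γ = min{1/ψ(0), γ}`. -/
theorem explicit_scalar_bound_preservation
    (ψ : ℝ → ℝ) (α : ℝ) (hψ : IsSaturation ψ α)
    (Δx Δt : ℝ) (hΔx : 0 < Δx) (hΔt : 0 < Δt)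
    (ρ u : ℤ → ℝ) (U : ℝ) (hU : 0 < U) (hu : ∀ i, |u i| ≤ U)
    (hρ : ∀ i, 0 ≤ ρ i ∧ ρ i ≤ α)
    (hCFL : Δt ≤ min (1 / ψ 0) (gammaCFL ψ α) * Δx / (2 * U)) :
    ∀ i, 0 ≤ updateExplicit ψ Δx Δt ρ u i ∧ updateExplicit ψ Δx Δt ρ u i ≤ α := by
  obtain ⟨hα, _, hmono, hψα, hpos⟩ := hψ
  have hψ0 : 0 < ψ 0 := by
    have := hpos 0 le_rfl (by linarith)
    nlinarith
  have hψnn : ∀ s, 0 ≤ s → s ≤ α → 0 ≤ ψ s := by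
    intro s hs hs'
    rcases eq_or_lt_of_le hs' with h | h
    · simp [h, hψα]
    · have := hpos s hs (ne_of_lt h); nlinarith
  have hψle : ∀ s, 0 ≤ s → ψ s ≤ ψ 0 := fun s hs => hmono 0 s le_rfl hs
  set lam := Δt / Δx with hlam
  have hlampos : 0 < lam := div_pos hΔt hΔx
  -- CFL consequences
  have h2lU : 2 * lam * U ≤ min (1 / ψ 0) (gammaCFL ψ α) := by
    have h1 : Δt * (2 * U) ≤ min (1 / ψ 0) (gammaCFL ψ α) * Δx :=
      (le_div_iff₀ (by positivity)).mp hCFL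
    have h2 : Δt * (2 * U) / Δx ≤ min (1 / ψ 0) (gammaCFL ψ α) :=
      (div_le_iff₀ hΔx).mpr h1
    calc 2 * lam * U = Δt * (2 * U) / Δx := by rw [hlam]; ring
      _ ≤ _ := h2
  have hhalf : ∀ s, 0 ≤ s → lam * U * ψ s ≤ 1 / 2 := by
    intro s hs
    have h1 : 2 * lam * U ≤ 1 / ψ 0 := le_trans h2lU (min_le_left _ _)
    have h2 : ψ s ≤ ψ 0 := hψle s hs
    have h3 : 2 * lam * U * ψ 0 ≤ 1 := by
      rw [← le_div_iff₀ hψ0] at *; exact h1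
    nlinarith [mul_pos hlampos hU, hψnn, mul_le_mul_of_nonneg_left h2 (le_of_lt (by positivity : (0:ℝ) < lam * U))]
  have hgam : ∀ s, 0 ≤ s → s ≤ α → 2 * lam * U * (α * ψ s) ≤ α - s := by
    intro s hs hs'
    rcases eq_or_lt_of_le hs' with h | h
    · simp [h, hψα]
    · have hψs : 0 < ψ s := by
        have := hpos s hs (ne_of_lt h); nlinarith
    
      have hbdd : BddBelow ((fun s => (α - s) / (α * ψ s)) '' Set.Ico 0 α) := by
        refine ⟨0, ?_⟩
        rintro x ⟨t, ⟨ht0, htα⟩, rfl⟩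
        have hψt : 0 < ψ t := by
          have := hpos t ht0 (ne_of_lt htα); nlinarith
        exact div_nonneg (by linarith) (by positivity)
      have hmem : (α - s) / (α * ψ s) ∈ (fun s => (α - s) / (α * ψ s)) '' Set.Ico 0 α :=
        ⟨s, ⟨hs, h⟩, rfl⟩
      have hg : gammaCFL ψ α ≤ (α - s) / (α * ψ s) := csInf_le hbdd hmem
      have h1 : 2 * lam * U ≤ (α - s) / (α * ψ s) :=
        le_trans (le_trans h2lU (min_le_right _ _)) hg
      have hps : 0 < α * ψ s := by positivity
      rw [le_div_iff₀ hps] at h1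
      exact h1
  intro i
  have hb : ∀ j : ℤ, 0 ≤ ρ j ∧ ρ j ≤ α := hρ
  have hrec : ∀ j : ℤ, (0 ≤ recE 2 Δx ρ j ∧ recE 2 Δx ρ j ≤ α) ∧
      (0 ≤ recW 2 Δx ρ j ∧ recW 2 Δx ρ j ≤ α) := by
    intro j
    exact rec_mem Δx α hΔx ρ j (hb (j-1)).1 (hb j).1 (hb (j+1)).1
      (hb (j-1)).2 (hb j).2 (hb (j+1)).2
  obtain ⟨⟨hE0, hEα⟩, ⟨hW0, hWα⟩⟩ := hrec i
  obtain ⟨_, ⟨hWp0, hWpα⟩⟩ := hrec (i+1)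
  obtain ⟨⟨hEm0, hEmα⟩, _⟩ := hrec (i-1)
  set E := recE 2 Δx ρ i with hE
  set W := recW 2 Δx ρ i with hW
  set Wp := recW 2 Δx ρ (i+1) with hWp
  set Em := recE 2 Δx ρ (i-1) with hEm
  set a := max (u i) 0 with haa
  set b := min (u i) 0 with hbb
  set a' := max (u (i-1)) 0 with haa'
  set b' := min (u (i-1)) 0 with hbb'
  have ha0 : 0 ≤ a := le_max_right _ _
  have haU : a ≤ U := max_le (le_of_abs_le (hu i)) (le_of_lt hU)
  have hb0 : b ≤ 0 := min_le_right _ _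
  have hbU : -U ≤ b := le_min (neg_le_of_abs_le (hu i)) (by linarith)
  have ha0' : 0 ≤ a' := le_max_right _ _
  have haU' : a' ≤ U := max_le (le_of_abs_le (hu (i-1))) (le_of_lt hU)
  have hb0' : b' ≤ 0 := min_le_right _ _
  have hbU' : -U ≤ b' := le_min (neg_le_of_abs_le (hu (i-1))) (by linarith)
  have hii : i - 1 + 1 = i := by ring
  have hρi : ρ i = (E + W) / 2 := by rw [hE, hW]; unfold recE recW; ring
  have hupd : updateExplicit ψ Δx Δt ρ u i =
      ρ i - lam * (E * ψ Wp * a + Wp * ψ E * b - (Em * ψ W * a' + W * ψ Em * b')) := by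
    unfold updateExplicit numFlux
    rw [hii, hlam]
  have hψE : 0 ≤ ψ E := hψnn E hE0 hEα
  have hψW : 0 ≤ ψ W := hψnn W hW0 hWα
  have hψWp : 0 ≤ ψ Wp := hψnn Wp hWp0 hWpα
  have hψEm : 0 ≤ ψ Em := hψnn Em hEm0 hEmα
  have hγE : 2 * lam * U * (α * ψ E) ≤ α - E := hgam E hE0 hEα
  have hγW : 2 * lam * U * (α * ψ W) ≤ α - W := hgam W hW0 hWα
  have hhWp : lam * U * ψ Wp ≤ 1/2 := hhalf Wp hWp0
  have hhEm : lam * U * ψ Em ≤ 1/2 := hhalf Em hEm0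
  clear_value E W Wp Em a b a' b' lam
  have hlam0 : 0 ≤ lam := hlampos.le
  constructor
  · -- nonnegativity
    have g1 : 0 ≤ E * (1/2 - lam * ψ Wp * a) := by
      have p := mul_le_mul_of_nonneg_left haU (mul_nonneg hlam0 hψWp)
      have : lam * ψ Wp * a ≤ 1/2 := by linarith [p, hhWp]
      exact mul_nonneg hE0 (by linarith)
    have g2 : 0 ≤ W * (1/2 + lam * ψ Em * b') := by
      have p := mul_le_mul_of_nonneg_left (show -b' ≤ U by linarith)
        (mul_nonneg hlam0 hψEm)
      have : lam * ψ Em * (-b') ≤ 1/2 := by linarith [p, hhEm]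
      exact mul_nonneg hW0 (by linarith)
    have g3 : 0 ≤ -(lam * (Wp * ψ E * b)) := by
      have p := mul_nonneg (mul_nonneg hlam0 (mul_nonneg hWp0 hψE))
        (neg_nonneg.mpr hb0)
      linarith [p]
    have g4 : 0 ≤ lam * (Em * ψ W * a') :=
      mul_nonneg hlam0 (mul_nonneg (mul_nonneg hEm0 hψW) ha0')
    have heq : updateExplicit ψ Δx Δt ρ u i =
        E * (1/2 - lam * ψ Wp * a) + W * (1/2 + lam * ψ Em * b')
          + (-(lam * (Wp * ψ E * b))) + lam * (Em * ψ W * a') := by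
      rw [hupd, hρi]; ring
    linarith [heq]
  · -- upper bound
    have g1 : 0 ≤ (α - E)/2 + lam * (Wp * ψ E * b) := by
      have p1 : Wp * (-b) ≤ α * U := mul_le_mul hWpα (by linarith) (by linarith) hα.le
      have p2 := mul_le_mul_of_nonneg_left p1 (mul_nonneg hlam0 hψE)
      linarith [p2, hγE]
    have g2 : 0 ≤ (α - W)/2 - lam * (Em * ψ W * a') := by
      have p1 : Em * a' ≤ α * U := mul_le_mul hEmα haU' ha0' hα.le
      have p2 := mul_le_mul_of_nonneg_left p1 (mul_nonneg hlam0 hψW)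
      linarith [p2, hγW]
    have g3 : 0 ≤ lam * (E * ψ Wp * a) :=
      mul_nonneg hlam0 (mul_nonneg (mul_nonneg hE0 hψWp) ha0)
    have g4 : 0 ≤ -(lam * (W * ψ Em * b')) := by
      have p := mul_nonneg (mul_nonneg hlam0 (mul_nonneg hW0 hψEm))
        (neg_nonneg.mpr hb0')
      linarith [p]
    have key : α - updateExplicit ψ Δx Δt ρ u i =
        ((α - E)/2 + lam * (Wp * ψ E * b)) + ((α - W)/2 - lam * (Em * ψ W * a'))
          + lam * (E * ψ Wp * a) + (-(lam * (W * ψ Em * b'))) := by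
      rw [hupd, hρi]; ring
    linarith [key]
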